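/- Let H be a bounded operator on ℓ²(Γ) for a uniformly discrete set Γ ⊆ ℝ^n, with matrix elements satisfying the short-range condition |H_{xy}| ≤ C·d(x,y)^{-(n+ε)} for some C, ε > 0. For m > 0, let G^m be the trimmed operator defined by G^m_{xy} = H_{xy} if d(x,y) ≤ m and G^m_{xy} = 0 otherwise. Then ‖H − G^m‖ → 0 as m → ∞; more precisely, there is a constant C₂ depending only on n, ε, and the separation of Γ, such that ‖H − G^m‖ ≤ C·C₂·m^{-ε}. -/

import Mathlib

/-!
By Schur's test, `‖H - G‖` is at most the largest ℓ¹-norm of a row or column of the matrix of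
`H - G`, i.e. the tail `∑_{d(x,y) > m} C d(x,y)^{-(n+ε)}`. Since `Γ` is `l`-separated, this tail
only involves `d(x,y) ≥ t := max m l`. Cut it into the dyadic shells `2ᵏt ≤ d(x,y) ≤ 2ᵏ⁺¹t`:
disjoint balls of radius `l/2` show that the `k`-th shell contains at most `(5·2ᵏt/l)ⁿ` points,
so it contributes at most `C (5/l)ⁿ t^{-ε} 2^{-kε}`, and the geometric series gives
`C (5/l)ⁿ (1 - 2^{-ε})⁻¹ m^{-ε}`.
-/

open scoped ENNReal NNReal

open Function Metric MeasureTheory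

theorem ENNReal.two_mul_le_add_sq (a b : ℝ≥0∞) : 2 * a * b ≤ a ^ 2 + b ^ 2 := by
  rcases eq_or_ne a ⊤ with rfl | ha
  · simp
  rcases eq_or_ne b ⊤ with rfl | hb
  · simp
  lift a to ℝ≥0 using ha
  lift b to ℝ≥0 using hb
  exact_mod_cast _root_.two_mul_le_add_sq a b

/-- The bilinear form of **Schur's test**: AM-GM splits each term `u x * v y` into squares, which
are then summed against the row and column sums of `a` respectively. -/
theorem ENNReal.two_mul_tsum_tsum_le_of_row_col {ι : Type*} (u v : ι → ℝ≥0∞)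
    (a : ι → ι → ℝ≥0∞) {S : ℝ≥0∞} (hrow : ∀ x, ∑' y, a x y ≤ S) (hcol : ∀ y, ∑' x, a x y ≤ S) :
    2 * ∑' x, ∑' y, u x * v y * a x y ≤ S * (∑' x, u x ^ 2 + ∑' y, v y ^ 2) := by
  have hu : ∑' x, ∑' y, u x ^ 2 * a x y ≤ S * ∑' x, u x ^ 2 := by
    simp_rw [ENNReal.tsum_mul_left, ← ENNReal.tsum_mul_left (a := S), mul_comm S]
    exact ENNReal.tsum_le_tsum fun x => mul_le_mul_right (hrow x) _
  have hv : ∑' x, ∑' y, v y ^ 2 * a x y ≤ S * ∑' y, v y ^ 2 := by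
    rw [ENNReal.tsum_comm]
    simp_rw [ENNReal.tsum_mul_left, ← ENNReal.tsum_mul_left (a := S), mul_comm S]
    exact ENNReal.tsum_le_tsum fun y => mul_le_mul_right (hcol y) _
  calc 2 * ∑' x, ∑' y, u x * v y * a x y
      = ∑' x, ∑' y, 2 * u x * v y * a x y := by
        simp_rw [← ENNReal.tsum_mul_left, mul_assoc]
    _ ≤ ∑' x, ∑' y, (u x ^ 2 * a x y + v y ^ 2 * a x y) :=
        ENNReal.tsum_le_tsum fun x => ENNReal.tsum_le_tsum fun y => by
          rw [← add_mul]; exact mul_le_mul_left (ENNReal.two_mul_le_add_sq _ _) _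
    _ ≤ S * ∑' x, u x ^ 2 + S * ∑' y, v y ^ 2 := by
        simp_rw [ENNReal.tsum_add]; exact add_le_add hu hv
    _ = S * (∑' x, u x ^ 2 + ∑' y, v y ^ 2) := (mul_add _ _ _).symm

namespace lp

variable {ι 𝕜 : Type*} [RCLike 𝕜]

theorem tsum_enorm_sq {E : ι → Type*} [∀ i, NormedAddCommGroup (E i)] (f : lp E 2) :
    ∑' i, ‖f i‖ₑ ^ 2 = ‖f‖ₑ ^ 2 := by
  have h2 : (0 : ℝ) < (2 : ℝ≥0∞).toReal := by norm_num
  have h := lp.norm_rpow_eq_tsum h2 f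
  simp only [ENNReal.toReal_ofNat, Real.rpow_two] at h
  rw [← ofReal_norm, ← ENNReal.ofReal_pow (norm_nonneg _), h,
    ENNReal.ofReal_tsum_of_nonneg (fun i => by positivity)]
  · simp_rw [ENNReal.ofReal_pow (norm_nonneg _), ofReal_norm]
  · simpa using (lp.memℓp f).summable h2

variable [DecidableEq ι]

noncomputable def matrixEntry (A : lp (fun _ : ι => 𝕜) 2 →L[𝕜] lp (fun _ : ι => 𝕜) 2)
    (x y : ι) : 𝕜 :=
  inner 𝕜 (lp.single 2 x (1 : 𝕜)) (A (lp.single 2 y (1 : 𝕜)))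

theorem matrixEntry_sub (A B : lp (fun _ : ι => 𝕜) 2 →L[𝕜] lp (fun _ : ι => 𝕜) 2) (x y : ι) :
    matrixEntry (A - B) x y = matrixEntry A x y - matrixEntry B x y := by
  simp only [matrixEntry, sub_apply, inner_sub_right]

theorem hasSum_matrixEntry_mul (A : lp (fun _ : ι => 𝕜) 2 →L[𝕜] lp (fun _ : ι => 𝕜) 2)
    (g : lp (fun _ : ι => 𝕜) 2) (x : ι) :
    HasSum (fun y => matrixEntry A x y * g y) (A g x) := by
  have h := ((lp.hasSum_single ENNReal.ofNat_ne_top g).mapL A).mapL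
    (innerSL 𝕜 (lp.single 2 x (1 : 𝕜)))
  convert h using 1
  · ext y
    have hsingle : lp.single 2 y (g y) = g y • lp.single (E := fun _ : ι => 𝕜) 2 y 1 := by
      rw [← lp.single_smul, smul_eq_mul, mul_one]
    rw [hsingle, map_smul, innerSL_apply_apply, inner_smul_right, matrixEntry, mul_comm]
  · simp [lp.inner_single_left]

theorem enorm_inner_le_tsum_tsum (A : lp (fun _ : ι => 𝕜) 2 →L[𝕜] lp (fun _ : ι => 𝕜) 2)
    (f g : lp (fun _ : ι => 𝕜) 2) :
    ‖inner 𝕜 f (A g)‖ₑ ≤ ∑' x, ∑' y, ‖f x‖ₑ * ‖g y‖ₑ * ‖matrixEntry A x y‖ₑ := by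
  rw [lp.inner_eq_tsum]
  refine enorm_tsum_le_tsum_enorm.trans (ENNReal.tsum_le_tsum fun x => ?_)
  rw [← (hasSum_matrixEntry_mul A g x).tsum_eq, RCLike.inner_apply, enorm_mul, RCLike.enorm_conj,
    mul_comm]
  calc ‖f x‖ₑ * ‖∑' y, matrixEntry A x y * g y‖ₑ
      ≤ ‖f x‖ₑ * ∑' y, ‖matrixEntry A x y * g y‖ₑ := by gcongr; exact enorm_tsum_le_tsum_enorm
    _ = ∑' y, ‖f x‖ₑ * ‖g y‖ₑ * ‖matrixEntry A x y‖ₑ := by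
      rw [← ENNReal.tsum_mul_left]
      refine tsum_congr fun y => ?_
      rw [enorm_mul, mul_comm ‖matrixEntry A x y‖ₑ, mul_assoc]

/-- **Schur's test.** -/
theorem opNorm_le_of_tsum_enorm_matrixEntry_le
    (A : lp (fun _ : ι => 𝕜) 2 →L[𝕜] lp (fun _ : ι => 𝕜) 2) {S : ℝ} (hS : 0 ≤ S)
    (hrow : ∀ x, ∑' y, ‖matrixEntry A x y‖ₑ ≤ ENNReal.ofReal S)
    (hcol : ∀ y, ∑' x, ‖matrixEntry A x y‖ₑ ≤ ENNReal.ofReal S) : ‖A‖ ≤ S := by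
  refine ContinuousLinearMap.opNorm_le_of_re_inner_le hS fun g f hg hf => ?_
  have hunit : ∀ h : lp (fun _ : ι => 𝕜) 2, ‖h‖ = 1 → ∑' i, ‖h i‖ₑ ^ 2 = 1 := fun h hh => by
    rw [tsum_enorm_sq, ← ofReal_norm, hh, ENNReal.ofReal_one, one_pow]
  have h2 : 2 * ‖inner 𝕜 f (A g)‖ₑ ≤ 2 * ENNReal.ofReal S :=
    calc 2 * ‖inner 𝕜 f (A g)‖ₑ
        ≤ 2 * ∑' x, ∑' y, ‖f x‖ₑ * ‖g y‖ₑ * ‖matrixEntry A x y‖ₑ := by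
          gcongr; exact enorm_inner_le_tsum_tsum A f g
      _ ≤ ENNReal.ofReal S * (∑' x, ‖f x‖ₑ ^ 2 + ∑' y, ‖g y‖ₑ ^ 2) :=
          ENNReal.two_mul_tsum_tsum_le_of_row_col _ _ _ hrow hcol
      _ = 2 * ENNReal.ofReal S := by rw [hunit f hf, hunit g hg, one_add_one_eq_two, mul_comm]
  have hle : ‖inner 𝕜 f (A g)‖ ≤ S := by
    rw [← ENNReal.ofReal_le_ofReal_iff hS, ofReal_norm]
    exact (ENNReal.mul_le_mul_iff_right two_ne_zero ENNReal.ofNat_ne_top).1 h2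
  calc RCLike.re (inner 𝕜 (A g) f) ≤ ‖inner 𝕜 (A g) f‖ := RCLike.re_le_norm _
    _ = ‖inner 𝕜 f (A g)‖ := norm_inner_symm _ _
    _ ≤ S := hle

end lp

theorem encard_le_of_pairwise_dist {n : ℕ} {l R : ℝ} (hl : 0 < l) (hR : 0 ≤ R)
    {s : Set (Fin n → ℝ)} (hs : s.Pairwise (l ≤ dist · ·)) {x : Fin n → ℝ}
    (hsx : s ⊆ closedBall x R) : (s.encard : ℝ≥0∞) ≤ ENNReal.ofReal (((2 * R + l) / l) ^ n) := by
  have hvol : ∀ y : Fin n → ℝ, volume (ball y (l / 2)) = ENNReal.ofReal (l ^ n) := fun y => by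
    rw [Real.volume_pi_ball y (by positivity), Fintype.card_fin, mul_div_cancel₀ _ two_ne_zero]
  have hdisj : Pairwise (Disjoint on fun y : s => ball (y : Fin n → ℝ) (l / 2)) :=
    fun y z hyz => ball_disjoint_ball <| by
      linarith [hs y.2 z.2 (Subtype.coe_injective.ne hyz)]
  have hunion : (⋃ y : s, ball (y : Fin n → ℝ) (l / 2)) ⊆ closedBall x (R + l / 2) :=
    Set.iUnion_subset fun y => ball_subset_closedBall.trans
      (closedBall_subset_closedBall' (by linarith [mem_closedBall.1 (hsx y.2)]))
  have hpack : (s.encard : ℝ≥0∞) * ENNReal.ofReal (l ^ n) ≤ ENNReal.ofReal ((2 * R + l) ^ n) :=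
    calc (s.encard : ℝ≥0∞) * ENNReal.ofReal (l ^ n)
        = ∑' y : s, volume (ball (y : Fin n → ℝ) (l / 2)) := by
          simp only [hvol, ENNReal.tsum_set_const]
      _ ≤ volume (⋃ y : s, ball (y : Fin n → ℝ) (l / 2)) :=
          tsum_meas_le_meas_iUnion_of_disjoint _ (fun _ => measurableSet_ball) hdisj
      _ ≤ volume (closedBall x (R + l / 2)) := measure_mono hunion
      _ = ENNReal.ofReal ((2 * R + l) ^ n) := by
          rw [Real.volume_pi_closedBall x (by positivity), Fintype.card_fin]; ring_nf
  rw [div_pow, ENNReal.ofReal_div_of_pos (by positivity)]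
  exact ENNReal.le_div_iff_mul_le (by simp [hl]) (by simp) |>.2 hpack

def dyadicShell {X : Type*} [PseudoMetricSpace X] (x : X) (r : ℝ) (k : ℕ) : Set X :=
  closedBall x (2 ^ (k + 1) * r) \ ball x (2 ^ k * r)

theorem ite_le_tsum_indicator_dyadicShell {X : Type*} [PseudoMetricSpace X] {s t : ℝ}
    (hs : 0 ≤ s) (ht : 0 < t) (x y : X) :
    (if t ≤ dist x y then ENNReal.ofReal (dist x y ^ (-s)) else 0) ≤
      ∑' k : ℕ, (dyadicShell x t k).indicator
        (fun _ => ENNReal.ofReal ((2 ^ k * t) ^ (-s))) y := by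
  split_ifs with hty
  swap
  · exact zero_le
  obtain ⟨k, hk, hk'⟩ := exists_nat_pow_near ((one_le_div ht).2 hty) one_lt_two
  rw [le_div_iff₀ ht] at hk
  rw [div_lt_iff₀ ht] at hk'
  refine le_trans ?_ (ENNReal.le_tsum k)
  have hyk : y ∈ dyadicShell x t k :=
    ⟨mem_closedBall'.2 hk'.le, by simpa [mem_ball, dist_comm] using hk⟩
  rw [Set.indicator_of_mem hyk]
  exact ENNReal.ofReal_le_ofReal
    (Real.rpow_le_rpow_of_nonpos (by positivity) hk (neg_nonpos.2 hs))

/-- `(5 / l) ^ n` bounds the number of `l`-separated points in a dyadic shell, rescaled by its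
radius, and `(1 - 2 ^ (-ε))⁻¹` is the geometric series summing the shells. -/
noncomputable def trimmingConstant (n : ℕ) (l ε : ℝ) : ℝ := (5 / l) ^ n * (1 - 2 ^ (-ε))⁻¹

theorem trimmingConstant_nonneg (n : ℕ) {l ε : ℝ} (hl : 0 < l) (hε : 0 < ε) :
    0 ≤ trimmingConstant n l ε := by
  have : (2 : ℝ) ^ (-ε) < 1 := Real.rpow_lt_one_of_one_lt_of_neg one_lt_two (neg_neg_of_pos hε)
  unfold trimmingConstant
  exact mul_nonneg (by positivity) (inv_nonneg.2 (by linarith))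

theorem tsum_indicator_dyadicShell_le {n : ℕ} {l ε t : ℝ} (hl : 0 < l)
    {Γ : Set (Fin n → ℝ)} (hΓ : Γ.Pairwise (l ≤ dist · ·)) (x : Fin n → ℝ) (ht : l ≤ t) (k : ℕ) :
    ∑' y : Γ, (dyadicShell x t k).indicator
        (fun _ => ENNReal.ofReal ((2 ^ k * t) ^ (-((n : ℝ) + ε)))) y ≤
      ENNReal.ofReal ((5 / l) ^ n * t ^ (-ε) * ((2 : ℝ) ^ (-ε)) ^ k) := by
  set A := dyadicShell x t k
  have ht0 : 0 < t := hl.trans_le ht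
  have hr : (0 : ℝ) < 2 ^ k * t := by positivity
  have hcount : ((Γ ∩ A).encard : ℝ≥0∞) ≤ ENNReal.ofReal ((5 * (2 ^ k * t) / l) ^ n) := by
    refine (encard_le_of_pairwise_dist hl (by positivity) (hΓ.mono Set.inter_subset_left)
      (Set.inter_subset_right.trans Set.sdiff_subset)).trans (ENNReal.ofReal_le_ofReal ?_)
    gcongr
    have : t ≤ 2 ^ k * t := le_mul_of_one_le_left ht0.le (one_le_pow₀ one_le_two)
    have h4 : 2 * (2 ^ (k + 1) * t) = 4 * (2 ^ k * t) := by ring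
    linarith
  have halg : (5 * (2 ^ k * t) / l) ^ n * (2 ^ k * t) ^ (-((n : ℝ) + ε))
      = (5 / l) ^ n * t ^ (-ε) * ((2 : ℝ) ^ (-ε)) ^ k := by
    rw [mul_div_right_comm, mul_pow, mul_assoc, ← Real.rpow_natCast (2 ^ k * t),
      ← Real.rpow_add hr, show (n : ℝ) + -((n : ℝ) + ε) = -ε by ring,
      Real.mul_rpow (by positivity) ht0.le,
      ← Real.rpow_pow_comm zero_le_two]
    ring
  calc ∑' y : Γ, A.indicator (fun _ => ENNReal.ofReal ((2 ^ k * t) ^ (-((n : ℝ) + ε)))) y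
      = (Γ ∩ A).encard * ENNReal.ofReal ((2 ^ k * t) ^ (-((n : ℝ) + ε))) := by
        rw [tsum_subtype, Set.indicator_indicator, ← tsum_subtype, ENNReal.tsum_set_const]
    _ ≤ ENNReal.ofReal ((5 * (2 ^ k * t) / l) ^ n) *
          ENNReal.ofReal ((2 ^ k * t) ^ (-((n : ℝ) + ε))) := by gcongr
    _ = ENNReal.ofReal ((5 / l) ^ n * t ^ (-ε) * ((2 : ℝ) ^ (-ε)) ^ k) := by
        rw [← ENNReal.ofReal_mul (by positivity), halg]

theorem tsum_rpow_dist_tail_le {n : ℕ} {l ε t : ℝ} (hl : 0 < l) (hε : 0 < ε)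
    {Γ : Set (Fin n → ℝ)} (hΓ : Γ.Pairwise (l ≤ dist · ·)) (x : Fin n → ℝ) (ht : l ≤ t) :
    ∑' y : Γ, (if t ≤ dist x y then ENNReal.ofReal (dist x y ^ (-((n : ℝ) + ε))) else 0) ≤
      ENNReal.ofReal (trimmingConstant n l ε * t ^ (-ε)) := by
  have hr0 : (0 : ℝ) ≤ 2 ^ (-ε) := Real.rpow_nonneg zero_le_two _
  have hr1 : (2 : ℝ) ^ (-ε) < 1 :=
    Real.rpow_lt_one_of_one_lt_of_neg one_lt_two (neg_neg_of_pos hε)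
  have ht0 : 0 < t := hl.trans_le ht
  calc _ ≤ ∑' y : Γ, ∑' k : ℕ, (dyadicShell x t k).indicator
          (fun _ => ENNReal.ofReal ((2 ^ k * t) ^ (-((n : ℝ) + ε)))) y :=
        ENNReal.tsum_le_tsum fun y => ite_le_tsum_indicator_dyadicShell (by positivity) ht0 x y
    _ = ∑' k : ℕ, ∑' y : Γ, (dyadicShell x t k).indicator
          (fun _ => ENNReal.ofReal ((2 ^ k * t) ^ (-((n : ℝ) + ε)))) y := ENNReal.tsum_comm
    _ ≤ ∑' k : ℕ, ENNReal.ofReal ((5 / l) ^ n * t ^ (-ε) * ((2 : ℝ) ^ (-ε)) ^ k) :=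
        ENNReal.tsum_le_tsum fun k => tsum_indicator_dyadicShell_le hl hΓ x ht k
    _ = ENNReal.ofReal (∑' k : ℕ, (5 / l) ^ n * t ^ (-ε) * ((2 : ℝ) ^ (-ε)) ^ k) :=
        (ENNReal.ofReal_tsum_of_nonneg (fun k => by positivity)
          ((summable_geometric_of_lt_one hr0 hr1).mul_left _)).symm
    _ = ENNReal.ofReal (trimmingConstant n l ε * t ^ (-ε)) := by
        rw [tsum_mul_left, tsum_geometric_of_lt_one hr0 hr1, trimmingConstant]
        ring_nf

theorem tsum_trimmed_rpow_dist_le {n : ℕ} {l ε C m : ℝ} (hl : 0 < l) (hε : 0 < ε) (hC : 0 ≤ C)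
    (hm : 0 < m) {Γ : Set (Fin n → ℝ)} (hΓ : Γ.Pairwise (l ≤ dist · ·)) {x : Fin n → ℝ}
    (hx : x ∈ Γ) :
    ∑' y : Γ, (if dist x y ≤ m then 0 else ENNReal.ofReal (C * dist x y ^ (-((n : ℝ) + ε)))) ≤
      ENNReal.ofReal (C * trimmingConstant n l ε * m ^ (-ε)) := by
  set t := max m l
  have hterm : ∀ y : Γ,
      (if dist x y ≤ m then 0 else ENNReal.ofReal (C * dist x y ^ (-((n : ℝ) + ε)))) ≤
        ENNReal.ofReal C *
          if t ≤ dist x y then ENNReal.ofReal (dist x y ^ (-((n : ℝ) + ε))) else 0 := by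
    intro y
    split_ifs with hym hyt hyt
    · exact zero_le
    · exact zero_le
    · rw [ENNReal.ofReal_mul hC]
    · have hxy : x ≠ y := fun h => hym (by simpa [h] using hm.le)
      exact absurd (max_le (not_le.1 hym).le (hΓ hx y.2 hxy)) hyt
  have htm : t ^ (-ε) ≤ m ^ (-ε) :=
    Real.rpow_le_rpow_of_nonpos hm (le_max_left m l) (neg_nonpos.2 hε.le)
  calc _ ≤ ∑' y : Γ, ENNReal.ofReal C *
          if t ≤ dist x y then ENNReal.ofReal (dist x y ^ (-((n : ℝ) + ε))) else 0 :=
        ENNReal.tsum_le_tsum hterm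
    _ = ENNReal.ofReal C * ∑' y : Γ,
          if t ≤ dist x y then ENNReal.ofReal (dist x y ^ (-((n : ℝ) + ε))) else 0 :=
        ENNReal.tsum_mul_left
    _ ≤ ENNReal.ofReal C * ENNReal.ofReal (trimmingConstant n l ε * t ^ (-ε)) := by
        gcongr; exact tsum_rpow_dist_tail_le hl hε hΓ x (le_max_right m l)
    _ ≤ ENNReal.ofReal (C * trimmingConstant n l ε * m ^ (-ε)) := by
        rw [← ENNReal.ofReal_mul hC, mul_assoc]
        have := trimmingConstant_nonneg n hl hε
        gcongr

open Classical

/-- **Trimming a short-range operator.** Let `Γ ⊆ ℝⁿ` be uniformly discrete with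
separation `l` (maximum distance). There is a constant `C₂ = C₂(n, ε, l)` such
that: if `H` is a bounded operator on `ℓ²(Γ)` whose matrix elements satisfy the
short-range bound `|H_{xy}| ≤ C·d(x,y)^{-(n+ε)}` (for `x ≠ y`), and `G` is a
trimmed operator whose matrix elements agree with those of `H` for `d(x,y) ≤ m`
and vanish otherwise, then `‖H − G‖ ≤ C·C₂·m^{-ε}`. -/
theorem trimming_norm_bound (n : ℕ) (l ε : ℝ) (hl : 0 < l) (hε : 0 < ε) :
    ∃ C₂ : ℝ, ∀ (Γ : Set (Fin n → ℝ)),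
      (∀ x ∈ Γ, ∀ y ∈ Γ, x ≠ y → l < dist x y) →
      ∀ (H G : lp (fun _ : Γ => ℂ) 2 →L[ℂ] lp (fun _ : Γ => ℂ) 2)
        (C m : ℝ), 0 ≤ C → 0 < m →
        (∀ x y : Γ, x ≠ y →
          ‖(inner ℂ (lp.single 2 x (1 : ℂ)) (H (lp.single 2 y (1 : ℂ))) : ℂ)‖
            ≤ C * (dist (x : Fin n → ℝ) (y : Fin n → ℝ)) ^ (-((n : ℝ) + ε))) →
        (∀ x y : Γ,
          (inner ℂ (lp.single 2 x (1 : ℂ)) (G (lp.single 2 y (1 : ℂ))) : ℂ)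
            = if dist (x : Fin n → ℝ) (y : Fin n → ℝ) ≤ m
              then (inner ℂ (lp.single 2 x (1 : ℂ)) (H (lp.single 2 y (1 : ℂ))) : ℂ)
              else 0) →
        ‖H - G‖ ≤ C * C₂ * m ^ (-ε) := by
  refine ⟨trimmingConstant n l ε, fun Γ hΓ H G C m hC hm hH hG => ?_⟩
  have hΓ' : Γ.Pairwise (l ≤ dist · ·) := fun x hx y hy hxy => (hΓ x hx y hy hxy).le
  have hentry : ∀ x y : Γ, ‖lp.matrixEntry (H - G) x y‖ₑ ≤
      if dist (x : Fin n → ℝ) y ≤ m then 0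
      else ENNReal.ofReal (C * dist (x : Fin n → ℝ) y ^ (-((n : ℝ) + ε))) := by
    intro x y
    rw [lp.matrixEntry_sub, lp.matrixEntry, lp.matrixEntry, hG x y]
    split_ifs with hxy
    · simp
    · rw [sub_zero, ← ofReal_norm]
      exact ENNReal.ofReal_le_ofReal (hH x y fun h => hxy (by simpa [h] using hm.le))
  refine lp.opNorm_le_of_tsum_enorm_matrixEntry_le _
    (mul_nonneg (mul_nonneg hC (trimmingConstant_nonneg n hl hε)) (Real.rpow_nonneg hm.le _))
    (fun x => ?_) (fun y => ?_)
  · exact (ENNReal.tsum_le_tsum (hentry x)).trans (tsum_trimmed_rpow_dist_le hl hε hC hm hΓ' x.2)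
  · refine (ENNReal.tsum_le_tsum fun x => (hentry x y).trans_eq ?_).trans
      (tsum_trimmed_rpow_dist_le hl hε hC hm hΓ' y.2)
    rw [dist_comm]
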